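/- Extension of the Vandermonde–Chu summation. Let n be a nonnegative integer, a, c complex, λ = c − a − m. Assume (λ)_m ≠ 0 (in particular (c − a − m)_m ≠ 0), a ≠ f_j for 1 ≤ j ≤ r, and (c)_s ≠ 0, (f_j)_s ≠ 0 for 1 ≤ s ≤ n. Then Σ_{s=0}^{n} (−n)_s (a)_s Π_{j=1}^{r} (f_j + m_j)_s / ( (c)_s s! Π_{j=1}^{r} (f_j)_s ) = ( (c − a − m)_n / (c)_n ) · Q_m(−n). -/
import Mathlib

/-- Pochhammer symbol `(a)ₖ = a(a+1)⋯(a+k−1)` for complex `a`. -/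
noncomputable def poch (a : ℂ) (k : ℕ) : ℂ := ∏ i ∈ Finset.range k, (a + i)

/-- Stirling numbers of the second kind `S(n, k)`. -/
def stirling2 : ℕ → ℕ → ℕ
  | 0, 0 => 1
  | 0, _ + 1 => 0
  | _ + 1, 0 => 0
  | n + 1, k + 1 => (k + 1) * stirling2 n (k + 1) + stirling2 n k

lemma poch_zero (a : ℂ) : poch a 0 = 1 := by simp [poch]

lemma poch_succ (a : ℂ) (k : ℕ) : poch a (k + 1) = poch a k * (a + k) :=
  Finset.prod_range_succ _ _

lemma poch_succ' (a : ℂ) (k : ℕ) : poch a (k + 1) = a * poch (a + 1) k := by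
  rw [poch, Finset.prod_range_succ' (fun i => a + i) k]
  simp only [Nat.cast_add, Nat.cast_one, Nat.cast_zero, add_zero]
  rw [mul_comm, poch]
  congr 1
  exact Finset.prod_congr rfl fun i _ => by ring

lemma poch_add (a : ℂ) (j k : ℕ) : poch a (j + k) = poch a j * poch (a + j) k := by
  rw [poch, Finset.prod_range_add]
  congr 1
  exact Finset.prod_congr rfl fun i _ => by push_cast; ring

lemma poch_neg_nat (n s : ℕ) :
    poch (-(n : ℂ)) s = (-1) ^ s * (n.descFactorial s : ℂ) := by
  induction s with
  | zero => simp [poch_zero]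
  | succ k ih =>
    rw [poch_succ, ih, Nat.descFactorial_succ]
    rcases le_or_gt k n with h | h
    · have : ((n - k : ℕ) : ℂ) = (n : ℂ) - k := by push_cast [h]; ring
      rw [Nat.cast_mul, this]
      ring
    · rw [Nat.descFactorial_eq_zero_iff_lt.2 h]
      push_cast
      ring

lemma poch_neg_eq_zero_of_lt (n s : ℕ) (h : n < s) : poch (-(n : ℂ)) s = 0 := by
  rw [poch_neg_nat, Nat.descFactorial_eq_zero_iff_lt.2 h]
  simp

/-- Falling factorial `x(x−1)⋯(x−k+1)`. -/
noncomputable def fall (x : ℂ) (k : ℕ) : ℂ := ∏ i ∈ Finset.range k, (x - i)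

lemma fall_zero (x : ℂ) : fall x 0 = 1 := by simp [fall]

lemma fall_succ (x : ℂ) (k : ℕ) : fall x (k + 1) = fall x k * (x - k) :=
  Finset.prod_range_succ _ _

lemma fall_nat (s k : ℕ) : fall (s : ℂ) k = (s.descFactorial k : ℂ) := by
  induction k with
  | zero => simp [fall_zero]
  | succ k ih =>
    rw [fall_succ, ih, Nat.descFactorial_succ, Nat.cast_mul]
    rcases le_or_gt k s with h | h
    · have : ((s - k : ℕ) : ℂ) = (s : ℂ) - k := by push_cast [h]; ring
      rw [this]; ring
    · rw [Nat.descFactorial_eq_zero_iff_lt.2 h]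
      simp

lemma stirling2_eq_zero {j k : ℕ} (h : j < k) : stirling2 j k = 0 := by
  induction j generalizing k with
  | zero => cases k with
    | zero => omega
    | succ k => rfl
  | succ j ih =>
    cases k with
    | zero => omega
    | succ k =>
      rw [stirling2, ih (show j < k + 1 by omega), ih (show j < k by omega)]
      ring

lemma pow_eq_sum_stirling (x : ℂ) (j : ℕ) :
    x ^ j = ∑ k ∈ Finset.range (j + 1), (stirling2 j k : ℂ) * fall x k := by
  induction j with
  | zero => simp [fall_zero, stirling2]
  | succ j ih =>
    have key : ∀ k : ℕ, x * fall x k = fall x (k + 1) + (k : ℂ) * fall x k := by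
      intro k
      rw [fall_succ]
      ring
    calc x ^ (j + 1) = x * x ^ j := by ring
      _ = ∑ k ∈ Finset.range (j + 1), (stirling2 j k : ℂ) * (x * fall x k) := by
          rw [ih, Finset.mul_sum]
          exact Finset.sum_congr rfl fun k _ => by ring
      _ = (∑ k ∈ Finset.range (j + 1), (stirling2 j k : ℂ) * fall x (k + 1))
            + ∑ k ∈ Finset.range (j + 1), (stirling2 j k : ℂ) * (k : ℂ) * fall x k := by
          rw [← Finset.sum_add_distrib]
          exact Finset.sum_congr rfl fun k _ => by rw [key]; ring
      _ = ∑ k ∈ Finset.range (j + 2), (stirling2 (j+1) k : ℂ) * fall x k := by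
          rw [Finset.sum_range_succ' (fun k => (stirling2 (j+1) k : ℂ) * fall x k) (j+1)]
          have h0 : (stirling2 (j+1) 0 : ℂ) * fall x 0 = 0 := by simp [stirling2]
          rw [h0, add_zero]
          have h1 : ∑ k ∈ Finset.range (j + 1), (stirling2 j k : ℂ) * (k : ℂ) * fall x k
              = ∑ k ∈ Finset.range (j + 1),
                  (stirling2 j (k+1) : ℂ) * ((k:ℂ)+1) * fall x (k+1) := by
            rw [Finset.sum_range_succ' (fun k => (stirling2 j k : ℂ) * (k : ℂ) * fall x k) j,
              Finset.sum_range_succ]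
            simp [stirling2_eq_zero (show j < j + 1 by omega)]
          rw [h1, ← Finset.sum_add_distrib]
          refine Finset.sum_congr rfl fun k _ => ?_
          have : stirling2 (j+1) (k+1) = (k + 1) * stirling2 j (k + 1) + stirling2 j k := rfl
          rw [this]
          push_cast
          ring

lemma chu_poly (N : ℕ) : ∀ b c : ℂ,
    ∑ s ∈ Finset.range (N + 1),
      (-1) ^ s * (N.choose s : ℂ) * poch b s * poch (c + s) (N - s)
    = poch (c - b) N := by
  induction N with
  | zero => intro b c; simp [poch_zero]
  | succ N ih =>
    intro b c
    have step : ∑ s ∈ Finset.range (N + 2),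
        (-1) ^ s * ((N+1).choose s : ℂ) * poch b s * poch (c + s) (N + 1 - s)
        = (c - b) * ∑ s ∈ Finset.range (N + 1),
            (-1) ^ s * (N.choose s : ℂ) * poch b s * poch ((c + 1) + s) (N - s) := by
      rw [Finset.sum_range_succ' (fun s => (-1) ^ s * ((N+1).choose s : ℂ) * poch b s
        * poch (c + s) (N + 1 - s)) (N+1)]
      have hsplit : ∀ s ∈ Finset.range (N + 1),
          (-1) ^ (s+1) * ((N+1).choose (s+1) : ℂ) * poch b (s+1)
              * poch (c + (s+1 : ℕ)) (N + 1 - (s+1))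
          = (-1) ^ (s+1) * (N.choose s : ℂ) * poch b (s+1) * poch (c + (s+1:ℕ)) (N - s)
            + (-1) ^ (s+1) * (N.choose (s+1) : ℂ) * poch b (s+1) * poch (c + (s+1:ℕ)) (N - s) := by
        intro s hs
        rw [Nat.choose_succ_succ, show N + 1 - (s+1) = N - s from by omega]
        push_cast
        ring
      rw [Finset.sum_congr rfl hsplit, Finset.sum_add_distrib]
      set g0 := (-1 : ℂ) ^ 0 * ((N+1).choose 0 : ℂ) * poch b 0 * poch (c + (0:ℕ)) (N + 1 - 0)
        with hg0
      set SA := ∑ s ∈ Finset.range (N + 1),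
          (-1) ^ (s+1) * (N.choose s : ℂ) * poch b (s+1) * poch (c + (s+1:ℕ)) (N - s) with hSA
      set SB := ∑ s ∈ Finset.range (N + 1),
          (-1) ^ (s+1) * (N.choose (s+1) : ℂ) * poch b (s+1) * poch (c + (s+1:ℕ)) (N - s) with hSB
      set R := ∑ s ∈ Finset.range (N + 1),
          (-1) ^ s * (N.choose s : ℂ) * poch b s * poch (c + s) (N + 1 - s) with hR
      have hreassemble : SB + g0 = R := by
        have h2 : ∑ s ∈ Finset.range (N + 2),
            (-1) ^ s * (N.choose s : ℂ) * poch b s * poch (c + s) (N + 1 - s) = R := by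
          rw [Finset.sum_range_succ, Nat.choose_succ_self]
          simp [hR]
        rw [← h2, Finset.sum_range_succ' (fun s => (-1) ^ s * (N.choose s : ℂ) * poch b s
          * poch (c + s) (N + 1 - s)) (N+1)]
        congr 1
        · rw [hSB]
          refine Finset.sum_congr rfl fun s hs => ?_
          rw [show N + 1 - (s + 1) = N - s from by omega]
        · rw [hg0]
          norm_num
      have final : R + SA = (c - b) * ∑ s ∈ Finset.range (N + 1),
          (-1) ^ s * (N.choose s : ℂ) * poch b s * poch ((c + 1) + s) (N - s) := by
        rw [hR, hSA, ← Finset.sum_add_distrib, Finset.mul_sum]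
        refine Finset.sum_congr rfl fun s hs => ?_
        rw [show N + 1 - s = (N - s) + 1 from by
              simp only [Finset.mem_range] at hs; omega,
            poch_succ' (c + s) (N - s), poch_succ b s,
            show (c + ((s:ℕ)+1:ℕ) : ℂ) = (c + s) + 1 from by push_cast; ring,
            show ((c + 1) + s : ℂ) = (c + s) + 1 from by ring]
        ring
      linear_combination hreassemble + final
    rw [step, ih b (c + 1)]
    rw [poch_succ' (c - b) N, show c + 1 - b = (c - b) + 1 from by ring]

lemma poch_split (c : ℂ) (s N : ℕ) (h : s ≤ N) :
    poch c N = poch c s * poch (c + s) (N - s) := by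
  rw [← poch_add]
  congr 1
  omega

lemma chu_div (N : ℕ) (b c : ℂ) (hc : ∀ s, s ≤ N → poch c s ≠ 0) :
    ∑ s ∈ Finset.range (N + 1),
      poch (-(N : ℂ)) s * poch b s / (poch c s * (s.factorial : ℂ))
    = poch (c - b) N / poch c N := by
  have hcN : poch c N ≠ 0 := hc N le_rfl
  rw [← chu_poly N b c, Finset.sum_div]
  refine Finset.sum_congr rfl fun s hs => ?_
  simp only [Finset.mem_range] at hs
  have hsN : s ≤ N := by omega
  have hd1 : poch c s * (s.factorial : ℂ) ≠ 0 :=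
    mul_ne_zero (hc s hsN) (by exact_mod_cast s.factorial_ne_zero)
  rw [div_eq_div_iff hd1 hcN, poch_neg_nat, poch_split c s N hsN,
    Nat.descFactorial_eq_factorial_mul_choose]
  push_cast
  ring

/-- **Extension of the Vandermonde–Chu summation.** -/
theorem extended_vandermonde_chu
    (r : ℕ) (hr : 0 < r) (mv : Fin r → ℕ) (hmv : ∀ j, 0 < mv j)
    (f : Fin r → ℂ) (m : ℕ) (hm : m = ∑ j, mv j)
    (Λ : ℂ) (hΛdef : Λ = ∏ j, poch (f j) (mv j)) (hΛ : Λ ≠ 0)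
    (σc : ℕ → ℂ)
    (hσ : ∀ x : ℂ, ∏ j, poch (f j + x) (mv j) = ∑ j ∈ Finset.range (m + 1), σc j * x ^ j)
    (C : ℕ → ℂ)
    (hC : ∀ k, k ≤ m → C k = Λ⁻¹ * ∑ j ∈ Finset.Icc k m, σc j * (stirling2 j k : ℂ))
    (a c lam : ℂ) (hlam : lam = c - a - m)
    (hlm : poch lam m ≠ 0)
    (haf : ∀ j, a ≠ f j)
    (Q : ℂ → ℂ)
    (hQ : ∀ t : ℂ, Q t = (poch lam m)⁻¹ *
      ∑ k ∈ Finset.range (m + 1), poch a k * C k * poch t k * poch (lam - t) (m - k))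
    (n : ℕ)
    (hc : ∀ s, 1 ≤ s → s ≤ n → poch c s ≠ 0)
    (hf : ∀ j, ∀ s, 1 ≤ s → s ≤ n → poch (f j) s ≠ 0) :
    ∑ s ∈ Finset.range (n + 1),
      poch (-(n : ℂ)) s * poch a s * (∏ j, poch (f j + mv j) s) /
        (poch c s * (Nat.factorial s : ℂ) * ∏ j, poch (f j) s)
      = poch (c - a - m) n / poch c n * Q (-(n : ℂ)) := by
  -- basic nonvanishing facts
  have hcs : ∀ s, s ≤ n → poch c s ≠ 0 := by
    intro s hs
    rcases Nat.eq_zero_or_pos s with h | h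
    · rw [h, poch_zero]; exact one_ne_zero
    · exact hc s h hs
  have hFs : ∀ s, s ≤ n → (∏ j, poch (f j) s) ≠ 0 := by
    intro s hs
    rcases Nat.eq_zero_or_pos s with h | h
    · rw [h]; simp [poch_zero]
    · exact Finset.prod_ne_zero_iff.2 fun j _ => hf j s h hs
  -- Step 1: rewrite each summand using the falling-factorial expansion
  have claimA : ∀ s : ℕ, s ≤ n →
      (∏ j, poch (f j + mv j) s) / (∏ j, poch (f j) s)
      = ∑ k ∈ Finset.range (m + 1), C k * fall (s : ℂ) k := by
    intro s hs
    have hA1 : Λ * (∏ j, poch (f j + mv j) s)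
        = (∏ j, poch (f j) s) * ∏ j, poch (f j + (s : ℂ)) (mv j) := by
      rw [hΛdef, ← Finset.prod_mul_distrib, ← Finset.prod_mul_distrib]
      refine Finset.prod_congr rfl fun j _ => ?_
      rw [← poch_add, ← poch_add, Nat.add_comm]
    have hA2 : Λ⁻¹ * (∏ j, poch (f j + (s : ℂ)) (mv j))
        = ∑ k ∈ Finset.range (m + 1), C k * fall (s : ℂ) k := by
      rw [hσ (s : ℂ)]
      have expand : ∑ j ∈ Finset.range (m + 1), σc j * (s : ℂ) ^ j
          = ∑ j ∈ Finset.range (m + 1), ∑ k ∈ Finset.range (m + 1),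
              σc j * (stirling2 j k : ℂ) * fall (s : ℂ) k := by
        refine Finset.sum_congr rfl fun j hj => ?_
        simp only [Finset.mem_range] at hj
        rw [pow_eq_sum_stirling (s : ℂ) j, Finset.mul_sum]
        rw [Finset.sum_subset (Finset.range_subset_range.2 (show j + 1 ≤ m + 1 by omega))]
        · exact Finset.sum_congr rfl fun k _ => by ring
        · intro k hk hk'
          simp only [Finset.mem_range] at hk hk'
          rw [stirling2_eq_zero (show j < k by omega)]
          simp
      rw [expand, Finset.sum_comm, Finset.mul_sum]
      refine Finset.sum_congr rfl fun k hk => ?_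
      simp only [Finset.mem_range] at hk
      rw [hC k (by omega)]
      have : ∑ j ∈ Finset.Icc k m, σc j * (stirling2 j k : ℂ)
          = ∑ j ∈ Finset.range (m + 1), σc j * (stirling2 j k : ℂ) := by
        refine Finset.sum_subset ?_ ?_
        · intro j hj
          simp only [Finset.mem_Icc] at hj
          simp only [Finset.mem_range]
          omega
        · intro j hj hj'
          simp only [Finset.mem_range] at hj
          simp only [Finset.mem_Icc] at hj'
          rw [stirling2_eq_zero (show j < k by omega)]
          simp
      rw [this, Finset.mul_sum, Finset.mul_sum, Finset.sum_mul]
      exact Finset.sum_congr rfl fun j _ => by ring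
    rw [div_eq_iff (hFs s hs), ← hA2]
    have hΛi : Λ⁻¹ * Λ = 1 := inv_mul_cancel₀ hΛ
    calc (∏ j, poch (f j + mv j) s)
        = Λ⁻¹ * (Λ * (∏ j, poch (f j + mv j) s)) := by
          rw [← mul_assoc, hΛi, one_mul]
      _ = Λ⁻¹ * ((∏ j, poch (f j) s) * ∏ j, poch (f j + (s : ℂ)) (mv j)) := by rw [hA1]
      _ = Λ⁻¹ * (∏ j, poch (f j + (s : ℂ)) (mv j)) * ∏ j, poch (f j) s := by ring
  have step1 : ∑ s ∈ Finset.range (n + 1),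
      poch (-(n : ℂ)) s * poch a s * (∏ j, poch (f j + mv j) s) /
        (poch c s * (Nat.factorial s : ℂ) * ∏ j, poch (f j) s)
      = ∑ k ∈ Finset.range (m + 1), ∑ s ∈ Finset.range (n + 1),
          C k * fall (s : ℂ) k * poch (-(n : ℂ)) s * poch a s /
            (poch c s * (Nat.factorial s : ℂ)) := by
    rw [Finset.sum_comm]
    refine Finset.sum_congr rfl fun s hs => ?_
    simp only [Finset.mem_range] at hs
    have hsn : s ≤ n := by omega
    have e1 : poch (-(n : ℂ)) s * poch a s * (∏ j, poch (f j + mv j) s) /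
        (poch c s * (Nat.factorial s : ℂ) * ∏ j, poch (f j) s)
        = poch (-(n : ℂ)) s * poch a s / (poch c s * (Nat.factorial s : ℂ))
          * ((∏ j, poch (f j + mv j) s) / (∏ j, poch (f j) s)) := by
      rw [div_mul_div_comm]
    rw [e1, claimA s hsn, Finset.mul_sum]
    exact Finset.sum_congr rfl fun k _ => by ring
  rw [step1]
  -- Step 2: evaluate the inner sums via Chu–Vandermonde
  have step2 : ∀ k ∈ Finset.range (m + 1),
      ∑ s ∈ Finset.range (n + 1),
          C k * fall (s : ℂ) k * poch (-(n : ℂ)) s * poch a s /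
            (poch c s * (Nat.factorial s : ℂ))
      = C k * poch a k * poch (-(n : ℂ)) k * poch (c - a) (n - k) / poch c n := by
    intro k hk
    rcases le_or_gt k n with hkn | hkn
    · -- k ≤ n : reindex and apply Chu–Vandermonde
      have hsum : ∑ s ∈ Finset.range (n + 1),
          C k * fall (s : ℂ) k * poch (-(n : ℂ)) s * poch a s /
            (poch c s * (Nat.factorial s : ℂ))
          = ∑ u ∈ Finset.range (n - k + 1),
            C k * fall ((k + u : ℕ) : ℂ) k * poch (-(n : ℂ)) (k + u) * poch a (k + u) /
              (poch c (k + u) * (Nat.factorial (k + u) : ℂ)) := by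
        rw [show n + 1 = k + (n - k + 1) from by omega, Finset.sum_range_add]
        have hzero : ∑ s ∈ Finset.range k,
            C k * fall (s : ℂ) k * poch (-(n : ℂ)) s * poch a s /
              (poch c s * (Nat.factorial s : ℂ)) = 0 := by
          refine Finset.sum_eq_zero fun s hs => ?_
          simp only [Finset.mem_range] at hs
          rw [fall_nat, Nat.descFactorial_eq_zero_iff_lt.2 hs]
          simp
        rw [hzero, zero_add]
      rw [hsum]
      have inner : ∀ u ∈ Finset.range (n - k + 1),
          C k * fall ((k + u : ℕ) : ℂ) k * poch (-(n : ℂ)) (k + u) * poch a (k + u) /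
              (poch c (k + u) * (Nat.factorial (k + u) : ℂ))
          = (C k * poch a k * poch (-(n : ℂ)) k / poch c k)
            * (poch (-((n - k : ℕ) : ℂ)) u * poch (a + k) u /
                (poch (c + k) u * (Nat.factorial u : ℂ))) := by
        intro u hu
        simp only [Finset.mem_range] at hu
        have hku : k + u ≤ n := by omega
        have hck : poch c k ≠ 0 := hcs k hkn
        have hcku : poch c (k + u) ≠ 0 := hcs _ hku
        have hcksplit : poch c (k + u) = poch c k * poch (c + k) u := poch_add c k u
        have hcku' : poch (c + (k : ℕ)) u ≠ 0 := by
          intro h0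
          apply hcku
          rw [hcksplit, h0, mul_zero]
        have hdesc : (((k + u).descFactorial k : ℕ) : ℂ) * (u.factorial : ℂ)
            = ((k + u).factorial : ℂ) := by
          have := Nat.factorial_mul_descFactorial (show k ≤ k + u by omega)
          rw [show k + u - k = u from by omega] at this
          exact_mod_cast by rw [mul_comm]; exact_mod_cast this
        have hnegsplit : poch (-(n : ℂ)) (k + u)
            = poch (-(n : ℂ)) k * poch (-((n - k : ℕ) : ℂ)) u := by
          rw [poch_add]
          congr 2
          push_cast [show k ≤ n from hkn]
          ring
        have hasplit : poch a (k + u) = poch a k * poch (a + k) u := poch_add a k u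
        rw [fall_nat, hnegsplit, hasplit, hcksplit]
        have hfac : ((k + u).factorial : ℂ) ≠ 0 := by
          exact_mod_cast (k + u).factorial_ne_zero
        have hufac : (u.factorial : ℂ) ≠ 0 := by exact_mod_cast u.factorial_ne_zero
        field_simp
        rw [← hdesc]
        ring
      rw [Finset.sum_congr rfl inner, ← Finset.mul_sum]
      have hchu : ∑ u ∈ Finset.range (n - k + 1),
          poch (-((n - k : ℕ) : ℂ)) u * poch (a + k) u /
            (poch (c + k) u * (Nat.factorial u : ℂ))
          = poch ((c + k) - (a + k)) (n - k) / poch (c + k) (n - k) := by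
        apply chu_div
        intro u hu
        have hku : k + u ≤ n := by omega
        have hcku : poch c (k + u) ≠ 0 := hcs _ hku
        intro h0
        apply hcku
        rw [poch_add, h0, mul_zero]
      rw [hchu, show (c + (k:ℕ)) - (a + (k:ℕ)) = c - a from by ring]
      have hck : poch c k ≠ 0 := hcs k hkn
      have hckn : poch (c + (k : ℕ)) (n - k) ≠ 0 := by
        intro h0
        apply hcs n le_rfl
        rw [poch_split c k n hkn, h0, mul_zero]
      rw [poch_split c k n hkn]
      field_simp
      try ring
    · -- k > n : both sides vanish
      have hz : ∑ s ∈ Finset.range (n + 1),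
          C k * fall (s : ℂ) k * poch (-(n : ℂ)) s * poch a s /
            (poch c s * (Nat.factorial s : ℂ)) = 0 := by
        refine Finset.sum_eq_zero fun s hs => ?_
        simp only [Finset.mem_range] at hs
        rw [fall_nat, Nat.descFactorial_eq_zero_iff_lt.2 (show s < k by omega)]
        simp
      rw [hz, poch_neg_eq_zero_of_lt n k hkn]
      simp
  rw [Finset.sum_congr rfl step2]
  -- Step 3: match with the right-hand side
  rw [hQ, ← hlam]
  simp only [sub_neg_eq_add]
  rw [Finset.mul_sum, Finset.mul_sum]
  refine Finset.sum_congr rfl fun k hk => ?_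
  simp only [Finset.mem_range] at hk
  rcases le_or_gt k n with hkn | hkn
  · have hca : c - a = lam + (m : ℂ) := by rw [hlam]; ring
    have key : poch lam m * poch (c - a) (n - k) = poch lam n * poch (lam + (n : ℂ)) (m - k) := by
      rw [hca, ← poch_add, ← poch_add]
      congr 1
      omega
    have hpca : poch (c - a) (n - k)
        = poch lam n * (poch lam m)⁻¹ * poch (lam + (n : ℂ)) (m - k) := by
      field_simp
      linear_combination key
    rw [hpca]
    ring
  · rw [poch_neg_eq_zero_of_lt n k hkn]
    simp
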